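/- arXiv:2210.04167 — 3 statements merged into one kernel-verified Lean document; each statement's English description precedes it below -/
import Mathlib

section
/- Let T > 0, A ∈ ℝ, B > 0, C > 0, and Ψ > 0. If ψ : [0,T] → ℝ is a differentiable function satisfying ψ'(t) = 2A ψ(t) + B ψ(t)² − C for all t ∈ [0,T] and ψ(T) = 2Ψ, then ψ(t) > 0 for every t ∈ [0,T]. -/
open Real Set

/-- Positivity of any solution of the Riccati terminal value problem
`ψ' = 2A ψ + B ψ² − C` on `[0,T]` with terminal value `ψ(T) = 2Ψ > 0`. -/
theorem riccati_solution_pos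
    (T A B C Ψ : ℝ) (hT : 0 < T) (hB : 0 < B) (hC : 0 < C) (hΨ : 0 < Ψ)
    (ψ : ℝ → ℝ)
    (hψ : ∀ t ∈ Set.Icc (0 : ℝ) T,
      HasDerivWithinAt ψ (2 * A * ψ t + B * (ψ t) ^ 2 - C) (Set.Icc (0 : ℝ) T) t)
    (hψT : ψ T = 2 * Ψ) :
    ∀ t ∈ Set.Icc (0 : ℝ) T, 0 < ψ t := by
  have hcont : ContinuousOn ψ (Set.Icc 0 T) := fun t ht => (hψ t ht).continuousWithinAt
  by_contra h
  push_neg at h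
  obtain ⟨t₀, ht₀, ht₀le⟩ := h
  have hψT' : 0 < ψ T := by rw [hψT]; linarith
  set Z : Set ℝ := Set.Icc t₀ T ∩ ψ ⁻¹' {0} with hZdef
  have hZsub : Set.Icc t₀ T ⊆ Set.Icc 0 T := Set.Icc_subset_Icc ht₀.1 le_rfl
  have hZclosed : IsClosed Z :=
    (hcont.mono hZsub).preimage_isClosed_of_isClosed isClosed_Icc isClosed_singleton
  have hZne : Z.Nonempty := by
    obtain ⟨c, hc, hc0⟩ := intermediate_value_Icc ht₀.2 (hcont.mono hZsub)
      (⟨ht₀le, le_of_lt hψT'⟩ : (0:ℝ) ∈ Set.Icc (ψ t₀) (ψ T))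
    exact ⟨c, hc, hc0⟩
  have hZbdd : BddAbove Z := ⟨T, fun x hx => hx.1.2⟩
  set s := sSup Z with hs
  have hsZ : s ∈ Z := hZclosed.csSup_mem hZne hZbdd
  have hψs : ψ s = 0 := hsZ.2
  have hsT : s < T := lt_of_le_of_ne hsZ.1.2 (by intro h; rw [h] at hψs; linarith)
  have hsIcc : s ∈ Set.Icc 0 T := hZsub hsZ.1
  have hpos : ∀ t ∈ Set.Ioc s T, 0 < ψ t := by
    intro t ht
    by_contra hle
    push_neg at hle
    have htIcc : t ∈ Set.Icc t₀ T := ⟨le_trans hsZ.1.1 (le_of_lt ht.1), ht.2⟩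
    obtain ⟨c, hc, hc0⟩ := intermediate_value_Icc ht.2
      (hcont.mono (Set.Icc_subset_Icc (hZsub htIcc).1 le_rfl))
      (⟨hle, le_of_lt hψT'⟩ : (0:ℝ) ∈ Set.Icc (ψ t) (ψ T))
    have hcZ : c ∈ Z := ⟨⟨le_trans htIcc.1 hc.1, hc.2⟩, hc0⟩
    have h1 : c ≤ s := le_csSup hZbdd hcZ
    have h2 : s < c := lt_of_lt_of_le ht.1 hc.1
    linarith
  have hd : HasDerivWithinAt ψ (-C) (Set.Icc 0 T) s := by
    have := hψ s hsIcc
    rw [hψs] at this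
    simpa using this
  have hd' : HasDerivWithinAt ψ (-C) (Set.Ioc s T) s :=
    hd.mono (fun x hx => ⟨le_trans hsIcc.1 (le_of_lt hx.1), hx.2⟩)
  rw [hasDerivWithinAt_iff_tendsto_slope] at hd'
  have hnotmem : s ∉ Set.Ioc s T := fun h => lt_irrefl s h.1
  rw [Set.diff_singleton_eq_self hnotmem] at hd'
  have hev : ∀ᶠ t in nhdsWithin s (Set.Ioc s T), slope ψ s t < 0 :=
    hd'.eventually (Iio_mem_nhds (by linarith : -C < 0))
  haveI : (nhdsWithin s (Set.Ioc s T)).NeBot := left_nhdsWithin_Ioc_neBot hsT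
  obtain ⟨t, hslope, htmem⟩ := (hev.and eventually_mem_nhdsWithin).exists
  have hts : 0 < t - s := sub_pos.mpr htmem.1
  have : slope ψ s t = ψ t / (t - s) := by rw [slope_def_field, hψs, sub_zero]
  rw [this] at hslope
  have := div_pos (hpos t htmem) hts
  linarith
end

section
/- Let T > 0, κ_a > 0, κ_n > 0, α_a, α_n ∈ ℝ, ϕ > 0. Suppose φ̄, ζ̄ : [0,T] → ℝ are differentiable functions satisfying, for all t ∈ [0,T], φ̄'(t) − (1/(2κ_a)) φ̄(t)² − (1/(2κ_n)) ζ̄(t) φ̄(t) + (α_a/(2κ_a)) φ̄(t) + (α_n/(2κ_n)) ζ̄(t) + 2ϕ = 0 and ζ̄'(t) − (1/(2κ_n)) ζ̄(t)² − (1/(2κ_a)) ζ̄(t) φ̄(t) + (α_n/(2κ_n)) ζ̄(t) + (α_a/(2κ_a)) φ̄(t) + 2ϕ = 0, together with the equal terminal conditions φ̄(T) = ζ̄(T). Then φ̄(t) = ζ̄(t) for all t ∈ [0,T]. -/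
open Real Set Filter

/-!
The constant and `α` terms cancel in the difference `u = φ - ζ`, which therefore satisfies the
linear equation `u' = c u` with the continuous coefficient `c = φ / (2 κa) + ζ / (2 κn)`, and
`u T = 0`. Since `c` is bounded on `[0, T]`, the right-hand side is uniformly Lipschitz in `u`,
so uniqueness of solutions (Grönwall) forces `u = 0`.
-/

theorem eqOn_zero_of_hasDerivWithinAt_smul_self_of_eq_zero_right
    {E : Type*} [NormedAddCommGroup E] [NormedSpace ℝ E] {a b : ℝ} {c : ℝ → ℝ} {u : ℝ → E}
    (hc : ContinuousOn c (Icc a b))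
    (hu : ∀ t ∈ Icc a b, HasDerivWithinAt u (c t • u t) (Icc a b) t) (hb : u b = 0) :
    EqOn u 0 (Icc a b) := by
  obtain ⟨C, hC⟩ := isCompact_Icc.exists_bound_of_continuousOn hc
  have hLip : ∀ t ∈ Ioc a b, LipschitzOnWith C.toNNReal (c t • · : E → E) univ := by
    intro t ht
    have hct : ‖c t‖₊ ≤ C.toNNReal := by
      rw [← NNReal.coe_le_coe, coe_nnnorm]
      exact (hC t (Ioc_subset_Icc_self ht)).trans (le_coe_toNNReal C)
    exact ((lipschitzWith_smul (c t)).weaken hct).lipschitzOnWith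
  have hu_left : ∀ t ∈ Ioc a b, HasDerivWithinAt u (c t • u t) (Iic t) t := fun t ht =>
    (hu t (Ioc_subset_Icc_self ht)).mono_of_mem_nhdsWithin <|
      mem_of_superset (Icc_mem_nhdsLE ht.1) (Icc_subset_Icc_right ht.2)
  have hzero_left : ∀ t ∈ Ioc a b, HasDerivWithinAt (0 : ℝ → E) (c t • (0 : E)) (Iic t) t :=
    fun t _ => by rw [smul_zero]; exact hasDerivWithinAt_const t (Iic t) (0 : E)
  exact ODE_solution_unique_of_mem_Icc_left hLip
    (fun t ht => (hu t ht).continuousWithinAt) hu_left (fun _ _ => mem_univ _)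
    continuousOn_const hzero_left (fun _ _ => mem_univ _) hb

theorem coupled_riccati_symmetry_general
    (T κa κn αa αn ϕ : ℝ)
    (φ ζ : ℝ → ℝ)
    (hφ : ∀ t ∈ Set.Icc (0 : ℝ) T,
      HasDerivWithinAt φ
        (1 / (2 * κa) * (φ t) ^ 2 + 1 / (2 * κn) * (ζ t * φ t)
          - αa / (2 * κa) * φ t - αn / (2 * κn) * ζ t - 2 * ϕ)
        (Set.Icc (0 : ℝ) T) t)
    (hζ : ∀ t ∈ Set.Icc (0 : ℝ) T,
      HasDerivWithinAt ζ
        (1 / (2 * κn) * (ζ t) ^ 2 + 1 / (2 * κa) * (ζ t * φ t)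
          - αn / (2 * κn) * ζ t - αa / (2 * κa) * φ t - 2 * ϕ)
        (Set.Icc (0 : ℝ) T) t)
    (hterm : φ T = ζ T) :
    ∀ t ∈ Set.Icc (0 : ℝ) T, φ t = ζ t := by
  set c : ℝ → ℝ := fun t => φ t / (2 * κa) + ζ t / (2 * κn)
  have hφc : ContinuousOn φ (Icc 0 T) := fun t ht => (hφ t ht).continuousWithinAt
  have hζc : ContinuousOn ζ (Icc 0 T) := fun t ht => (hζ t ht).continuousWithinAt
  have hc : ContinuousOn c (Icc 0 T) := (hφc.div_const _).add (hζc.div_const _)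
  have hdiff : ∀ t ∈ Icc 0 T,
      HasDerivWithinAt (fun s => φ s - ζ s) (c t • (φ t - ζ t)) (Icc 0 T) t := by
    intro t ht
    refine ((hφ t ht).sub (hζ t ht)).congr_deriv ?_
    rw [smul_eq_mul]
    ring
  intro t ht
  exact sub_eq_zero.mp <|
    eqOn_zero_of_hasDerivWithinAt_smul_self_of_eq_zero_right hc hdiff (sub_eq_zero.mpr hterm) ht

/-- Symmetry of the coupled Riccati system: two differentiable solutions of the
coupled Riccati terminal value system with equal terminal conditions coincide
on `[0,T]`. -/
theorem coupled_riccati_symmetry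
    (T κa κn αa αn ϕ : ℝ) (hT : 0 < T) (hκa : 0 < κa) (hκn : 0 < κn) (hϕ : 0 < ϕ)
    (φ ζ : ℝ → ℝ)
    (hφ : ∀ t ∈ Set.Icc (0 : ℝ) T,
      HasDerivWithinAt φ
        (1 / (2 * κa) * (φ t) ^ 2 + 1 / (2 * κn) * (ζ t * φ t)
          - αa / (2 * κa) * φ t - αn / (2 * κn) * ζ t - 2 * ϕ)
        (Set.Icc (0 : ℝ) T) t)
    (hζ : ∀ t ∈ Set.Icc (0 : ℝ) T,
      HasDerivWithinAt ζ
        (1 / (2 * κn) * (ζ t) ^ 2 + 1 / (2 * κa) * (ζ t * φ t)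
          - αn / (2 * κn) * ζ t - αa / (2 * κa) * φ t - 2 * ϕ)
        (Set.Icc (0 : ℝ) T) t)
    (hterm : φ T = ζ T) :
    ∀ t ∈ Set.Icc (0 : ℝ) T, φ t = ζ t :=
  coupled_riccati_symmetry_general T κa κn αa αn ϕ φ ζ hφ hζ hterm
end

section
/- Let (Ω, ℱ, ℙ) be a probability space, let E₀ and E be measurable spaces, let Y₀ : Ω → E₀ be measurable, and let (Y_j)_{j ≥ 1} be measurable maps Y_j : Ω → E such that the family (Y₀, Y₁, Y₂, …) is independent and the Y_j, j ≥ 1, all have the same distribution. Let g : E₀ × E → ℝ be measurable with g(Y₀, Y₁) integrable. Then, ℙ-almost surely, (1/N) ∑_{j=1}^N g(Y₀, Y_j) converges as N → ∞ to 𝔼[g(Y₀, Y₁) | σ(Y₀)]. -/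
/-!
Since `Y₀` is independent of the whole sequence `(Y_{j+1})_j`, the joint law of `Y₀` and the
sequence is the product `ν₀ ⊗ ρ` of their laws. For each fixed `y₀`, the ordinary strong law for
the i.i.d. variables `g (y₀, Y_j)` gives convergence of the averages to
`m y₀ = ∫ g (y₀, y) d(law Y₁)`, `ρ`-a.s.; Fubini on `ν₀ ⊗ ρ` turns "for `ν₀`-a.e. `y₀`, `ρ`-a.s."
into "ℙ-a.s." along `(Y₀, (Y_{j+1})_j)`. The same product structure identifies
`𝔼[g(Y₀, Y₁) | σ(Y₀)]` with `m ∘ Y₀`.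
-/

open MeasureTheory ProbabilityTheory Filter Finset Topology

section

variable {Ω α β : Type*} {mΩ : MeasurableSpace Ω} [MeasurableSpace α] [MeasurableSpace β]
  {μ : Measure Ω}

namespace ProbabilityTheory.IndepFun

variable [IsFiniteMeasure μ] {X : Ω → α} {Y : Ω → β}

lemma integrable_prod_map {F : Type*} [NormedAddCommGroup F] (hXY : X ⟂ᵢ[μ] Y)
    (hX : Measurable X) (hY : Measurable Y) {g : α × β → F} (hg : StronglyMeasurable g)
    (hint : Integrable (fun ω => g (X ω, Y ω)) μ) :
    Integrable g ((μ.map X).prod (μ.map Y)) := by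
  rw [← (indepFun_iff_map_prod_eq_prod_map_map hX.aemeasurable hY.aemeasurable).1 hXY]
  exact (integrable_map_measure hg.aestronglyMeasurable (hX.prodMk hY).aemeasurable).2 hint

lemma condExp_comp_ae_eq_integral {F : Type*} [NormedAddCommGroup F] [NormedSpace ℝ F]
    [CompleteSpace F] (hXY : X ⟂ᵢ[μ] Y) (hX : Measurable X) (hY : Measurable Y)
    {g : α × β → F} (hg : StronglyMeasurable g) (hint : Integrable (fun ω => g (X ω, Y ω)) μ) :
    μ[fun ω => g (X ω, Y ω) | MeasurableSpace.comap X inferInstance]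
      =ᵐ[μ] fun ω => ∫ y, g (X ω, y) ∂(μ.map Y) := by
  have hg_prod := hXY.integrable_prod_map hX hY hg hint
  have hm : StronglyMeasurable fun x => ∫ y, g (x, y) ∂(μ.map Y) := hg.integral_prod_right'
  have hm_int : Integrable (fun ω => ∫ y, g (X ω, y) ∂(μ.map Y)) μ :=
    (integrable_map_measure hm.aestronglyMeasurable hX.aemeasurable).1
      hg_prod.integral_prod_left
  refine (ae_eq_condExp_of_forall_setIntegral_eq hX.comap_le hint
    (fun s _ _ => hm_int.integrableOn) ?_
    (hm.comp_measurable (comap_measurable X)).aestronglyMeasurable).symm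
  rintro _ ⟨A, hA, rfl⟩ -
  calc ∫ ω in X ⁻¹' A, ∫ y, g (X ω, y) ∂(μ.map Y) ∂μ
      = ∫ x in A, ∫ y in Set.univ, g (x, y) ∂(μ.map Y) ∂(μ.map X) := by
        rw [Measure.restrict_univ]
        exact (setIntegral_map hA hm.aestronglyMeasurable hX.aemeasurable).symm
    _ = ∫ p in A ×ˢ Set.univ, g p ∂((μ.map X).prod (μ.map Y)) :=
        (setIntegral_prod _ hg_prod.integrableOn).symm
    _ = ∫ ω in X ⁻¹' A, g (X ω, Y ω) ∂μ := by
        rw [← (indepFun_iff_map_prod_eq_prod_map_map hX.aemeasurable hY.aemeasurable).1 hXY,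
          setIntegral_map (hA.prod .univ) hg.aestronglyMeasurable (hX.prodMk hY).aemeasurable,
          Set.mk_preimage_prod, Set.preimage_univ, Set.inter_univ]

lemma ae_mem_of_ae_ae (hXY : X ⟂ᵢ[μ] Y) (hX : Measurable X) (hY : Measurable Y)
    {s : Set (α × β)} (hs : MeasurableSet s) (h : ∀ᵐ x ∂(μ.map X), ∀ᵐ ω ∂μ, (x, Y ω) ∈ s) :
    ∀ᵐ ω ∂μ, (X ω, Y ω) ∈ s := by
  refine (ae_map_iff (p := (· ∈ s)) (hX.prodMk hY).aemeasurable hs).1 ?_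
  rw [(indepFun_iff_map_prod_eq_prod_map_map hX.aemeasurable hY.aemeasurable).1 hXY,
    Measure.ae_prod_mem_iff_ae_ae_mem hs]
  filter_upwards [h] with x hx
  exact (ae_map_iff hY.aemeasurable (measurable_prodMk_left hs)).2 hx

end ProbabilityTheory.IndepFun

lemma ae_tendsto_average_comp_of_pairwise_indepFun {X : ℕ → Ω → β} (hX₀ : Measurable (X 0))
    (hindep : Pairwise fun i j => X i ⟂ᵢ[μ] X j) (hident : ∀ i, IdentDistrib (X i) (X 0) μ μ)
    {f : β → ℝ} (hf : Measurable f) (hint : Integrable f (μ.map (X 0))) :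
    ∀ᵐ ω ∂μ, Tendsto (fun n : ℕ => (∑ i ∈ range n, f (X i ω)) / n) atTop
      (𝓝 (∫ y, f y ∂(μ.map (X 0)))) := by
  rw [integral_map hX₀.aemeasurable hf.aestronglyMeasurable]
  exact strong_law_ae_real (fun i => f ∘ X i)
    ((integrable_map_measure hf.aestronglyMeasurable hX₀.aemeasurable).1 hint)
    (fun i j hij => (hindep hij).comp hf hf) (fun i => (hident i).comp hf)

section HeadTail

variable {E₀ E : Type*} [MeasurableSpace E₀] [MeasurableSpace E] {Y₀ : Ω → E₀} {Y : ℕ → Ω → E}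

lemma indepFun_of_iIndep_ite
    (hindep : iIndep (fun i : ℕ => if i = 0 then MeasurableSpace.comap Y₀ inferInstance
      else MeasurableSpace.comap (Y i) inferInstance) μ)
    {i j : ℕ} (hi : i ≠ 0) (hj : j ≠ 0) (hij : i ≠ j) : Y i ⟂ᵢ[μ] Y j := by
  simpa only [IndepFun_iff_Indep, if_neg hi, if_neg hj] using hindep.indep hij

lemma indepFun_tail_of_iIndep_ite (hY₀ : Measurable Y₀) (hY : ∀ j, 1 ≤ j → Measurable (Y j))
    (hindep : iIndep (fun i : ℕ => if i = 0 then MeasurableSpace.comap Y₀ inferInstance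
      else MeasurableSpace.comap (Y i) inferInstance) μ) :
    Y₀ ⟂ᵢ[μ] fun ω i => Y (i + 1) ω := by
  set m : ℕ → MeasurableSpace Ω := fun i => if i = 0 then MeasurableSpace.comap Y₀ inferInstance
    else MeasurableSpace.comap (Y i) inferInstance
  have hm_le : ∀ i, m i ≤ mΩ := by
    intro i
    by_cases hi : i = 0
    · simpa [m, hi] using hY₀.comap_le
    · simpa [m, hi] using (hY i (Nat.one_le_iff_ne_zero.2 hi)).comap_le
  have h := indep_iSup_of_disjoint hm_le hindep (S := {0}) (T := {i | i ≠ 0}) (by simp)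
  have h_tail : Measurable[⨆ i ∈ {i : ℕ | i ≠ 0}, m i] fun ω i => Y (i + 1) ω :=
    @measurable_pi_lambda _ _ _ (⨆ i ∈ {i : ℕ | i ≠ 0}, m i) _ _ fun i =>
      Measurable.of_comap_le <|
        le_of_eq_of_le (if_neg i.succ_ne_zero).symm (le_biSup m i.succ_ne_zero)
  rw [IndepFun_iff_Indep]
  refine indep_of_indep_of_le_right (indep_of_indep_of_le_left h ?_) h_tail.comap_le
  simp [m]

end HeadTail

end

/-- Conditional strong law of large numbers: if the family `(Y₀, Y₁, Y₂, …)` is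
independent, the `Y_j`, `j ≥ 1`, are identically distributed and `g(Y₀, Y₁)` is
integrable, then `(1/N) ∑_{j=1}^N g(Y₀, Y_j)` converges ℙ-a.s. to
`𝔼[g(Y₀, Y₁) | σ(Y₀)]`. -/
theorem conditional_slln_empirical_average
    {Ω E₀ E : Type*} [MeasurableSpace Ω] [MeasurableSpace E₀] [MeasurableSpace E]
    (μ : Measure Ω) [IsProbabilityMeasure μ]
    (Y₀ : Ω → E₀) (Y : ℕ → Ω → E)
    (hY₀ : Measurable Y₀) (hY : ∀ j, 1 ≤ j → Measurable (Y j))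
    (hindep : iIndep
      (fun i : ℕ =>
        if i = 0 then MeasurableSpace.comap Y₀ inferInstance
        else MeasurableSpace.comap (Y i) inferInstance) μ)
    (hident : ∀ j, 1 ≤ j → IdentDistrib (Y j) (Y 1) μ μ)
    (g : E₀ × E → ℝ) (hg : Measurable g)
    (hint : Integrable (fun ω => g (Y₀ ω, Y 1 ω)) μ) :
    ∀ᵐ ω ∂μ,
      Tendsto
        (fun N : ℕ => (N : ℝ)⁻¹ * ∑ j ∈ Finset.Icc 1 N, g (Y₀ ω, Y j ω))
        atTop
        (nhds ((μ[fun ω' => g (Y₀ ω', Y 1 ω') |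
          MeasurableSpace.comap Y₀ inferInstance]) ω)) := by
  have hY₁ : Measurable (Y 1) := hY 1 le_rfl
  set Z : Ω → ℕ → E := fun ω i => Y (i + 1) ω
  have hZ : Measurable Z := measurable_pi_lambda _ fun i => hY (i + 1) i.succ_pos
  have hY₀Z : Y₀ ⟂ᵢ[μ] Z := indepFun_tail_of_iIndep_ite hY₀ hY hindep
  have hY₀Y₁ : Y₀ ⟂ᵢ[μ] Y 1 := hY₀Z.comp measurable_id (measurable_pi_apply 0)
  set m : E₀ → ℝ := fun y₀ => ∫ y, g (y₀, y) ∂(μ.map (Y 1))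
  have h_section : ∀ᵐ y₀ ∂(μ.map Y₀), ∀ᵐ ω ∂μ,
      Tendsto (fun N : ℕ => (∑ i ∈ range N, g (y₀, Z ω i)) / N) atTop (𝓝 (m y₀)) := by
    filter_upwards [(hY₀Y₁.integrable_prod_map hY₀ hY₁ hg.stronglyMeasurable
      hint).prod_right_ae] with y₀ hy₀
    exact ae_tendsto_average_comp_of_pairwise_indepFun hY₁
      (fun i j hij => indepFun_of_iIndep_ite hindep i.succ_ne_zero j.succ_ne_zero (by simpa))
      (fun i => hident (i + 1) i.succ_pos) (hg.comp measurable_prodMk_left) hy₀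
  have h_meas : MeasurableSet {p : E₀ × (ℕ → E) |
      Tendsto (fun N : ℕ => (∑ i ∈ range N, g (p.1, p.2 i)) / N) atTop (𝓝 (m p.1))} :=
    measurableSet_tendsto_fun (fun N => (Finset.measurable_sum _ fun i _ => hg.comp
      (measurable_fst.prodMk ((measurable_pi_apply i).comp measurable_snd))).div_const _)
      (hg.stronglyMeasurable.integral_prod_right'.measurable.comp measurable_fst)
  filter_upwards [hY₀Z.ae_mem_of_ae_ae hY₀ hZ h_meas h_section,
    hY₀Y₁.condExp_comp_ae_eq_integral hY₀ hY₁ hg.stronglyMeasurable hint]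
    with ω hω h_condExp
  rw [h_condExp]
  convert hω using 2 with N
  rw [range_eq_Ico, sum_Ico_add' (fun j => g (Y₀ ω, Y j ω)), Ico_add_one_right_eq_Icc,
    inv_mul_eq_div, zero_add]
end
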